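/- For |t| < min(1, a^{-1}), the generating function of the polynomials F_n satisfies ∑_{n=0}^∞ q^{n(n-1)/2} F_n(a,q;x) (-t)^n = ∑_{k=0}^∞ q^{k(k-1)/2} (-x t)^k / ((t;q)_{k+1} (a t;q)_{k+1}). -/

import Mathlib

/-!
With `gₙ = q^{n(n-1)/2} Fₙ` the recurrence becomes `gₙ₊₂ = (x qⁿ⁺¹ - (a+1)) gₙ₊₁ - a gₙ`: a
recurrence with characteristic roots `-1` and `-a`, perturbed by a term that decays like `qⁿ`.
Hence `gₙ = O(ρⁿ)` for every `ρ > max(1, |a|)`, so `S(u) = ∑ gₙ (-u)ⁿ` converges for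
`|u| < min(1, |a|⁻¹)`, and the recurrence turns into the functional equation
`(1 - u)(1 - a u) S(u) = 1 - x u S(q u)`. Iterating it along `t, q t, q² t, …` gives the partial
sums of the right-hand side plus the remainder `q^{K(K-1)/2} (-x t)^K S(q^K t) / ((t;q)_K (a t;q)_K)`,
which tends to `0` thanks to the factor `q^{K(K-1)/2}`.
-/

open Finset Filter Topology

/-- Finite q-Pochhammer symbol `(z;q)_k = ∏_{j<k} (1 - z qʲ)`. -/
noncomputable def qPoch (z q : ℂ) (k : ℕ) : ℂ := ∏ j ∈ range k, (1 - z * q ^ j)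

lemma le_mul_exp_of_le_one_add_mul_pow {C r : ℝ} (hC : 0 ≤ C) (hr0 : 0 ≤ r) (hr1 : r < 1)
    {M : ℕ → ℝ} (hM0 : 0 ≤ M 0) (hM : ∀ n, M (n + 1) ≤ (1 + C * r ^ n) * M n) (n : ℕ) :
    M n ≤ M 0 * Real.exp (C / (1 - r)) := by
  have hprod : M n ≤ M 0 * ∏ j ∈ range n, (1 + C * r ^ j) := by
    induction n with
    | zero => simp
    | succ n ih =>
      calc M (n + 1) ≤ (1 + C * r ^ n) * M n := hM n
        _ ≤ (1 + C * r ^ n) * (M 0 * ∏ j ∈ range n, (1 + C * r ^ j)) := by gcongr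
        _ = _ := by rw [prod_range_succ]; ring
  have hsum : ∑ j ∈ range n, C * r ^ j ≤ C / (1 - r) := by
    rw [← mul_sum, div_eq_mul_inv, ← tsum_geometric_of_lt_one hr0 hr1]
    gcongr
    exact (summable_geometric_of_lt_one hr0 hr1).sum_le_tsum _ fun j _ => by positivity
  calc M n ≤ M 0 * ∏ j ∈ range n, (1 + C * r ^ j) := hprod
    _ ≤ M 0 * Real.exp (C / (1 - r)) := by
      gcongr
      exact (Real.prod_one_add_le_exp_sum _ fun j => by positivity).trans (Real.exp_le_exp.mpr hsum)

lemma exists_mul_pow_le_of_coupled_le {A X r β : ℝ} (hA : 0 ≤ A) (hX : 0 ≤ X) (hr0 : 0 ≤ r)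
    (hr1 : r < 1) (hβ0 : 0 ≤ β) (hβ1 : β ≤ 1) (hAβ : A * β < 1) {G S : ℕ → ℝ}
    (hG0 : ∀ n, 0 ≤ G n) (hS0 : ∀ n, 0 ≤ S n) (hG : ∀ n, G (n + 1) ≤ G n + S n)
    (hS : ∀ n, S (n + 1) ≤ A * S n + X * r ^ (n + 1) * G (n + 1)) :
    ∃ K, ∀ n, G n * β ^ n ≤ K := by
  -- With this `θ` the weighted quantity `M` below satisfies `M (n + 1) ≤ (1 + θ X rⁿ) M n`.
  obtain ⟨θ, hθ, hθ1⟩ : ∃ θ : ℝ, 1 + θ * A * β = θ ∧ 1 ≤ θ := by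
    have hpos : 0 < 1 - A * β := sub_pos.mpr hAβ
    refine ⟨(1 - A * β)⁻¹, ?_, one_le_inv₀ hpos |>.mpr (by linarith [mul_nonneg hA hβ0])⟩
    linear_combination -inv_mul_cancel₀ hpos.ne'
  have hθ0 : 0 ≤ θ := zero_le_one.trans hθ1
  set M : ℕ → ℝ := fun n => G n * β ^ n + θ * (S n * β ^ (n + 1))
  have hM : ∀ n, M (n + 1) ≤ (1 + θ * X * r ^ n) * M n := by
    intro n
    have hr : X * r ^ (n + 1) * β ≤ X * r ^ n := by
      rw [pow_succ, mul_assoc, mul_assoc]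
      gcongr
      exact mul_le_of_le_one_right (by positivity) (mul_le_one₀ hr1.le hβ0 hβ1)
    have hθX : X * r ^ n ≤ θ * X * r ^ n := by
      rw [mul_assoc]; exact le_mul_of_one_le_left (by positivity) hθ1
    have hGn := hG0 n
    have hSn := hS0 n
    have hGn1 := hG0 (n + 1)
    have hSn1 := hS n
    have hGs := hG n
    calc M (n + 1)
        ≤ G (n + 1) * β ^ (n + 1) +
            θ * ((A * S n + X * r ^ (n + 1) * G (n + 1)) * β ^ (n + 1 + 1)) := by
          dsimp only [M]; gcongr
      _ = G (n + 1) * β ^ (n + 1) * (1 + θ * (X * r ^ (n + 1) * β)) +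
            θ * A * S n * β ^ (n + 2) := by
          ring
      _ ≤ (G n + S n) * β ^ (n + 1) * (1 + θ * (X * r ^ n)) + θ * A * S n * β ^ (n + 2) := by
          gcongr
      _ = G n * β ^ n * β * (1 + θ * X * r ^ n) + θ * (S n * β ^ (n + 1)) * (1 + X * r ^ n) := by
          linear_combination S n * β ^ (n + 1) * hθ
      _ ≤ G n * β ^ n * 1 * (1 + θ * X * r ^ n) +
            θ * (S n * β ^ (n + 1)) * (1 + θ * X * r ^ n) := by
          gcongr
      _ = (1 + θ * X * r ^ n) * M n := by ring
  have hM0 : ∀ n, 0 ≤ θ * (S n * β ^ (n + 1)) := fun n => by have := hS0 n; positivity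
  refine ⟨M 0 * Real.exp (θ * X / (1 - r)), fun n => ?_⟩
  calc G n * β ^ n ≤ M n := le_add_of_nonneg_right (hM0 n)
    _ ≤ _ := le_mul_exp_of_le_one_add_mul_pow (by positivity) hr0 hr1
        (add_nonneg (by simp [hG0 0]) (hM0 0)) hM n

lemma exists_gt_lt_one_mul_lt_one {τ A : ℝ} (hτ : τ < 1) (hA : A * τ < 1) :
    ∃ β, τ < β ∧ β < 1 ∧ A * β < 1 := by
  have h : ∀ᶠ β in 𝓝 τ, β < 1 ∧ A * β < 1 :=
    (gt_mem_nhds hτ).and (((continuous_const_mul A).tendsto τ).eventually (gt_mem_nhds hA))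
  exact (eventually_mem_nhdsWithin.and (nhdsWithin_le_nhds h) : ∀ᶠ β in 𝓝[>] τ, _).exists

lemma summable_pow_mul_pow_triangle {w r : ℝ} (hw : 0 ≤ w) (hr0 : 0 ≤ r) (hr1 : r < 1) :
    Summable fun k : ℕ => w ^ k * r ^ (k * (k - 1) / 2) := by
  have hlim : Tendsto (fun k : ℕ => w * r ^ k) atTop (𝓝 0) := by
    simpa using (tendsto_pow_atTop_nhds_zero_of_lt_one hr0 hr1).const_mul w
  refine summable_of_ratio_norm_eventually_le (r := 1 / 2) (by norm_num) ?_
  filter_upwards [hlim.eventually (eventually_le_nhds (by norm_num : (0 : ℝ) < 1 / 2))] with k hk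
  rw [Nat.triangle_succ, Real.norm_of_nonneg (by positivity), Real.norm_of_nonneg (by positivity)]
  calc w ^ (k + 1) * r ^ (k * (k - 1) / 2 + k) = w * r ^ k * (w ^ k * r ^ (k * (k - 1) / 2)) := by
        ring
    _ ≤ 1 / 2 * (w ^ k * r ^ (k * (k - 1) / 2)) := by gcongr

lemma qPoch_zero (z q : ℂ) : qPoch z q 0 = 1 := prod_range_zero _

lemma qPoch_succ (z q : ℂ) (k : ℕ) : qPoch z q (k + 1) = qPoch z q k * (1 - z * q ^ k) :=
  prod_range_succ _ _

lemma pow_le_norm_qPoch {z q : ℂ} (hz : ‖z‖ ≤ 1) (hq : ‖q‖ ≤ 1) (k : ℕ) :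
    (1 - ‖z‖) ^ k ≤ ‖qPoch z q k‖ := by
  rw [qPoch, norm_prod]
  refine (pow_eq_prod_const _ k).le.trans <|
    prod_le_prod (fun _ _ => sub_nonneg.mpr hz) fun j _ => ?_
  calc 1 - ‖z‖ ≤ 1 - ‖z * q ^ j‖ := by
        rw [norm_mul, norm_pow]
        exact sub_le_sub_left
          (mul_le_of_le_one_right (norm_nonneg z) (pow_le_one₀ (norm_nonneg q) hq)) 1
    _ ≤ ‖1 - z * q ^ j‖ := by simpa using norm_sub_norm_le (1 : ℂ) (z * q ^ j)

lemma qPoch_ne_zero {z q : ℂ} (hz : ‖z‖ < 1) (hq : ‖q‖ ≤ 1) (k : ℕ) : qPoch z q k ≠ 0 :=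
  norm_pos_iff.mp <| (pow_pos (sub_pos.mpr hz) k).trans_le (pow_le_norm_qPoch hz.le hq k)

/-- The `k`-th summand of the expansion is `lommelTerm a q x t k (k + 1)`; the remainder after `K`
summands is `lommelTerm a q x t K K * S (q ^ K * t)`. -/
noncomputable def lommelTerm (a q x t : ℂ) (k m : ℕ) : ℂ :=
  q ^ (k * (k - 1) / 2) * (-x * t) ^ k / (qPoch t q m * qPoch (a * t) q m)

lemma norm_lommelTerm_le {a q x t : ℂ} (hq : ‖q‖ ≤ 1) (ht : ‖t‖ < 1) (hat : ‖a * t‖ < 1) (k m : ℕ) :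
    ‖lommelTerm a q x t k m‖ ≤
      ‖q‖ ^ (k * (k - 1) / 2) * (‖x‖ * ‖t‖) ^ k / ((1 - ‖t‖) ^ m * (1 - ‖a * t‖) ^ m) := by
  rw [lommelTerm, norm_div, norm_mul, norm_mul, norm_pow, norm_pow, norm_mul, norm_neg]
  have h1 := sub_pos.mpr ht
  have h2 := sub_pos.mpr hat
  gcongr
  · exact pow_le_norm_qPoch ht.le hq m
  · exact pow_le_norm_qPoch hat.le hq m

lemma lommelTerm_mul_eq {a q x t : ℂ} {S : ℂ → ℂ} {k : ℕ} (ht : qPoch t q (k + 1) ≠ 0)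
    (hat : qPoch (a * t) q (k + 1) ≠ 0)
    (hS : S (q ^ k * t) * ((1 - q ^ k * t) * (1 - a * (q ^ k * t))) =
      1 - x * (q ^ k * t) * S (q * (q ^ k * t))) :
    lommelTerm a q x t k k * S (q ^ k * t) =
      lommelTerm a q x t k (k + 1) + lommelTerm a q x t (k + 1) (k + 1) * S (q ^ (k + 1) * t) := by
  rw [qPoch_succ] at ht hat
  obtain ⟨ht, ht'⟩ := mul_ne_zero_iff.mp ht
  obtain ⟨hat, hat'⟩ := mul_ne_zero_iff.mp hat
  have hS' : S (q ^ k * t) = (1 - x * (q ^ k * t) * S (q ^ (k + 1) * t)) /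
      ((1 - t * q ^ k) * (1 - a * t * q ^ k)) := by
    rw [eq_div_iff (mul_ne_zero ht' hat'), pow_succ', mul_assoc q]
    linear_combination hS
  simp only [lommelTerm, qPoch_succ, Nat.triangle_succ, hS']
  field_simp
  ring

lemma eq_sum_lommelTerm_add {a q x t : ℂ} {S : ℂ → ℂ} (ht : ∀ k, qPoch t q k ≠ 0)
    (hat : ∀ k, qPoch (a * t) q k ≠ 0)
    (hS : ∀ k : ℕ, S (q ^ k * t) * ((1 - q ^ k * t) * (1 - a * (q ^ k * t))) =
      1 - x * (q ^ k * t) * S (q * (q ^ k * t))) (K : ℕ) :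
    S t = ∑ k ∈ range K, lommelTerm a q x t k (k + 1) + lommelTerm a q x t K K * S (q ^ K * t) := by
  induction K with
  | zero => simp [lommelTerm, qPoch_zero]
  | succ K ih =>
    rw [ih, lommelTerm_mul_eq (ht _) (hat _) (hS K), sum_range_succ]
    ring

/-- The recurrence of `gₙ = q^{n(n-1)/2} Fₙ`, which is free of negative powers of `q`. -/
structure IsScaledLommel (a q x : ℂ) (g : ℕ → ℂ) : Prop where
  zero : g 0 = 1
  one : g 1 = x - (a + 1)
  succ_succ : ∀ n : ℕ, g (n + 2) = (x * q ^ (n + 1) - (a + 1)) * g (n + 1) - a * g n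

lemma isScaledLommel_of_recurrence {a q x : ℂ} (hq : q ≠ 0) {F : ℕ → ℂ} (hF0 : F 0 = 1)
    (hF1 : F 1 = x - (a + 1))
    (hFrec : ∀ n : ℕ, F (n + 2) =
      (x - (a + 1) * q ^ (-(n + 1 : ℤ))) * F (n + 1) - a * q ^ (-2 * (n + 1 : ℤ) + 1) * F n) :
    IsScaledLommel a q x fun n => q ^ (n * (n - 1) / 2) * F n where
  zero := by simp [hF0]
  one := by simp [hF1]
  succ_succ n := by
    have h1 : q ^ (-(n + 1 : ℤ)) = (q ^ (n + 1))⁻¹ := by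
      rw [← zpow_natCast, ← zpow_neg]; push_cast; rfl
    have h2 : q ^ (-2 * (n + 1 : ℤ) + 1) = (q ^ (2 * n + 1))⁻¹ := by
      rw [← zpow_natCast, ← zpow_neg]; push_cast; ring_nf
    simp only [show n + 2 = n + 1 + 1 from rfl, Nat.triangle_succ, hFrec, h1, h2]
    field_simp
    ring

namespace IsScaledLommel

variable {a q x : ℂ} {g : ℕ → ℂ}

lemma exists_norm_mul_pow_le (hg : IsScaledLommel a q x g) (hq : ‖q‖ < 1) {β : ℝ} (hβ0 : 0 ≤ β)
    (hβ1 : β ≤ 1) (haβ : ‖a‖ * β < 1) : ∃ K, ∀ n, ‖g n‖ * β ^ n ≤ K := by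
  -- `sₙ = gₙ₊₁ + gₙ` removes the characteristic root `-1`, leaving a first-order recurrence.
  set s : ℕ → ℂ := fun n => g (n + 1) + g n
  have hs : ∀ n, s (n + 1) = -a * s n + x * q ^ (n + 1) * g (n + 1) := fun n => by
    simp only [s, hg.succ_succ]; ring
  refine exists_mul_pow_le_of_coupled_le (norm_nonneg a) (norm_nonneg x) (norm_nonneg q) hq hβ0 hβ1
    haβ (fun n => norm_nonneg (g n)) (fun n => norm_nonneg (s n)) (fun n => ?_) (fun n => ?_)
  · simpa [s, add_comm] using norm_sub_le (s n) (g n)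
  · simpa [hs] using norm_add_le (-a * s n) (x * q ^ (n + 1) * g (n + 1))

lemma exists_summable_norm_tsum_le (hg : IsScaledLommel a q x g) (hq : ‖q‖ < 1) {τ : ℝ}
    (hτ0 : 0 ≤ τ) (hτ : τ < 1) (haτ : ‖a‖ * τ < 1) :
    ∃ B, ∀ u : ℂ, ‖u‖ ≤ τ →
      Summable (fun n => g n * (-u) ^ n) ∧ ‖∑' n, g n * (-u) ^ n‖ ≤ B := by
  obtain ⟨β, hτβ, hβ1, haβ⟩ := exists_gt_lt_one_mul_lt_one hτ haτ
  have hβ0 : 0 < β := hτ0.trans_lt hτβ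
  obtain ⟨K, hK⟩ := hg.exists_norm_mul_pow_le hq hβ0.le hβ1.le haβ
  have hgeom := (hasSum_geometric_of_lt_one (div_nonneg hτ0 hβ0.le)
    ((div_lt_one hβ0).mpr hτβ)).mul_left K
  refine ⟨K * (1 - τ / β)⁻¹, fun u hu => ?_⟩
  have hbound : ∀ n, ‖g n * (-u) ^ n‖ ≤ K * (τ / β) ^ n := fun n => by
    calc ‖g n * (-u) ^ n‖ ≤ ‖g n‖ * τ ^ n := by
          rw [norm_mul, norm_pow, norm_neg]; gcongr
      _ = ‖g n‖ * β ^ n * (τ / β) ^ n := by rw [div_pow]; field_simp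
      _ ≤ K * (τ / β) ^ n := by gcongr; exact hK n
  exact ⟨.of_norm_bounded hgeom.summable hbound, tsum_of_norm_bounded hgeom hbound⟩

lemma tsum_mul_eq (hg : IsScaledLommel a q x g) {u : ℂ}
    (hu : Summable fun n => g n * (-u) ^ n) (hqu : Summable fun n => g n * (-(q * u)) ^ n) :
    (∑' n, g n * (-u) ^ n) * ((1 - u) * (1 - a * u)) = 1 - x * u * ∑' n, g n * (-(q * u)) ^ n := by
  have h2 := (hasSum_nat_add_iff' 2).mpr hu.hasSum
  have hrec := (((hasSum_nat_add_iff' 1).mpr hqu.hasSum).mul_left (-x * u)).add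
    ((((hasSum_nat_add_iff' 1).mpr hu.hasSum).mul_left ((a + 1) * u)).sub
      (hu.hasSum.mul_left (a * u ^ 2)))
  have hterm : ∀ n, g (n + 2) * (-u) ^ (n + 2) = -x * u * (g (n + 1) * (-(q * u)) ^ (n + 1)) +
      ((a + 1) * u * (g (n + 1) * (-u) ^ (n + 1)) - a * u ^ 2 * (g n * (-u) ^ n)) := fun n => by
    rw [hg.succ_succ, neg_mul_eq_mul_neg, mul_pow]; ring
  simp only [← hterm] at hrec
  have := h2.unique hrec
  simp only [sum_range_succ, sum_range_zero, hg.zero, hg.one] at this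
  linear_combination this

theorem summable_and_hasSum (hg : IsScaledLommel a q x g) (hq : ‖q‖ < 1) {t : ℂ} (ht : ‖t‖ < 1)
    (hat : ‖a * t‖ < 1) :
    Summable (fun n => g n * (-t) ^ n) ∧
      HasSum (fun k => lommelTerm a q x t k (k + 1)) (∑' n, g n * (-t) ^ n) := by
  set S : ℂ → ℂ := fun u => ∑' n, g n * (-u) ^ n
  obtain ⟨B, hB⟩ := hg.exists_summable_norm_tsum_le hq (norm_nonneg t) ht (by rwa [← norm_mul])
  have horbit : ∀ k : ℕ, ‖q ^ k * t‖ ≤ ‖t‖ := fun k => by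
    rw [norm_mul, norm_pow]
    exact mul_le_of_le_one_left (norm_nonneg t) (pow_le_one₀ (norm_nonneg q) hq.le)
  have hfun : ∀ k : ℕ, S (q ^ k * t) * ((1 - q ^ k * t) * (1 - a * (q ^ k * t))) =
      1 - x * (q ^ k * t) * S (q * (q ^ k * t)) := fun k =>
    hg.tsum_mul_eq (hB _ (horbit k)).1 (by rw [← mul_assoc, ← pow_succ']; exact (hB _ (horbit _)).1)
  have hexp := eq_sum_lommelTerm_add (qPoch_ne_zero ht hq.le) (qPoch_ne_zero hat hq.le) hfun
  set w := ‖x‖ * ‖t‖ / ((1 - ‖t‖) * (1 - ‖a * t‖))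
  have hw : 0 ≤ w :=
    div_nonneg (by positivity) (mul_nonneg (sub_pos.mpr ht).le (sub_pos.mpr hat).le)
  have hmaj := summable_pow_mul_pow_triangle hw (norm_nonneg q) hq
  have hrem : Tendsto (fun K => lommelTerm a q x t K K * S (q ^ K * t)) atTop (𝓝 0) := by
    refine squeeze_zero_norm (fun K => ?_) (by simpa using hmaj.tendsto_atTop_zero.mul_const B)
    rw [norm_mul]
    gcongr
    · exact (norm_lommelTerm_le hq.le ht hat K K).trans_eq (by rw [← mul_pow, div_pow]; ring)
    · exact (hB _ (horbit K)).2
  have hterm : ∀ k, ‖lommelTerm a q x t k (k + 1)‖ ≤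
      (w ^ k * ‖q‖ ^ (k * (k - 1) / 2)) / ((1 - ‖t‖) * (1 - ‖a * t‖)) := fun k =>
    (norm_lommelTerm_le hq.le ht hat k (k + 1)).trans_eq
      (by rw [← mul_pow, pow_succ, div_pow, ← div_div]; ring)
  refine ⟨(hB t le_rfl).1, ?_⟩
  rw [hasSum_iff_tendsto_nat_of_summable_norm (.of_nonneg_of_le (fun _ => norm_nonneg _) hterm
    (hmaj.div_const _))]
  have hpartial : (fun K => ∑ k ∈ range K, lommelTerm a q x t k (k + 1)) =
      fun K => S t - lommelTerm a q x t K K * S (q ^ K * t) :=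
    funext fun K => eq_sub_of_add_eq (hexp K).symm
  rw [hpartial]
  simpa using (tendsto_const_nhds (x := S t)).sub hrem

end IsScaledLommel

/-- Generating function for the q-Lommel polynomials:
`∑ₙ q^{n(n-1)/2} Fₙ(a,q;x) (-t)ⁿ = ∑ₖ q^{k(k-1)/2}(-xt)ᵏ/((t;q)_{k+1}(at;q)_{k+1})`
for `|t| < min(1, a⁻¹)`. -/
theorem stmt5 (a q : ℝ) (ha : 0 < a) (hq0 : 0 < q) (hq1 : q < 1) (x : ℂ)
    (F : ℕ → ℂ)
    (hF0 : F 0 = 1) (hF1 : F 1 = x - ((a : ℂ) + 1))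
    (hFrec : ∀ n : ℕ, F (n + 2) =
      (x - ((a : ℂ) + 1) * (q : ℂ) ^ (-(n + 1 : ℤ))) * F (n + 1)
        - (a : ℂ) * (q : ℂ) ^ (-2 * (n + 1 : ℤ) + 1) * F n)
    (t : ℂ) (ht : ‖t‖ < min 1 a⁻¹) :
    Summable (fun n : ℕ => (q : ℂ) ^ (n * (n - 1) / 2 : ℕ) * F n * (-t) ^ n)
    ∧ Summable (fun k : ℕ =>
        (q : ℂ) ^ (k * (k - 1) / 2 : ℕ) * (-x * t) ^ k /
          (qPoch t q (k + 1) * qPoch ((a : ℂ) * t) q (k + 1)))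
    ∧ (∑' n : ℕ, (q : ℂ) ^ (n * (n - 1) / 2 : ℕ) * F n * (-t) ^ n)
      = ∑' k : ℕ, (q : ℂ) ^ (k * (k - 1) / 2 : ℕ) * (-x * t) ^ k /
          (qPoch t q (k + 1) * qPoch ((a : ℂ) * t) q (k + 1)) := by
  have hg := isScaledLommel_of_recurrence (Complex.ofReal_ne_zero.mpr hq0.ne') hF0 hF1 hFrec
  have hq : ‖(q : ℂ)‖ < 1 := by rwa [Complex.norm_of_nonneg hq0.le]
  have hat : ‖(a : ℂ) * t‖ < 1 := by
    rw [norm_mul, Complex.norm_of_nonneg ha.le, ← mul_inv_cancel₀ ha.ne']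
    exact mul_lt_mul_of_pos_left (ht.trans_le (min_le_right _ _)) ha
  obtain ⟨hsum, hhas⟩ := hg.summable_and_hasSum hq (ht.trans_le (min_le_left _ _)) hat
  exact ⟨hsum, hhas.summable, hhas.tsum_eq.symm⟩
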